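/- Let A be a Hopf algebra, P a right A-comodule algebra, (V, ρ_R) a right A^{op}-comodule algebra, and Φ : A → P a convolution-invertible unital linear map with Δ_R ∘ Φ = (Φ ⊗ id) ∘ Δ. Define Φ_E : V → P ⊗ V by Φ_E(v) = Φ(S(v₍₁₎)) ⊗ v₍₀₎. Then Φ_E(V) ⊆ E, i.e. Δ_E(Φ_E(v)) = Φ_E(v) ⊗ 1 for all v ∈ V. Moreover the left P-module map I : P ⊗ V → P ⊗ V, I(p ⊗ v) = p·Φ(S(v₍₁₎)) ⊗ v₍₀₎, is bijective with inverse Ĩ(p ⊗ v) = p·Φ⁻¹(S(v₍₁₎)) ⊗ v₍₀₎. -/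

import Mathlib

set_option maxHeartbeats 1000000
set_option synthInstance.maxHeartbeats 200000


open TensorProduct

variable (k : Type*) [Field k] {A P V : Type*} [Ring A] [HopfAlgebra k A]
  [Ring P] [Algebra k P] [Ring V] [Algebra k V]

/-- Multiplication of `V ⊗ A` with the reversed (opposite) product on the
`A`-leg: `(v ⊗ a)(w ⊗ b) ↦ vw ⊗ ba`. -/
noncomputable def mulRev : ((V ⊗[k] A) ⊗[k] (V ⊗[k] A)) →ₗ[k] V ⊗[k] A :=
  (TensorProduct.map (LinearMap.mul' k V)
      ((LinearMap.mul' k A) ∘ₗ (TensorProduct.comm k A A).toLinearMap)) ∘ₗ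
    (TensorProduct.tensorTensorTensorComm k V A V A).toLinearMap

/-- The coaction `Δ_E : P ⊗ V → (P ⊗ V) ⊗ A`,
`p ⊗ v ↦ p₍₀₎ ⊗ v₍₀₎ ⊗ v₍₁₎p₍₁₎`. -/
noncomputable def DeltaE (ρ : P →ₐ[k] P ⊗[k] A) (ρV : V →ₗ[k] V ⊗[k] A) :
    (P ⊗[k] V) →ₗ[k] (P ⊗[k] V) ⊗[k] A :=
  (TensorProduct.map LinearMap.id
      ((LinearMap.mul' k A) ∘ₗ (TensorProduct.comm k A A).toLinearMap)) ∘ₗ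
    (TensorProduct.tensorTensorTensorComm k P A V A).toLinearMap ∘ₗ
      (TensorProduct.map ρ.toLinearMap ρV)

/-- Convolution of linear maps `A → P`: `(f * g)(a) = f(a₍₁₎) g(a₍₂₎)`. -/
noncomputable def conv (f g : A →ₗ[k] P) : A →ₗ[k] P :=
  (LinearMap.mul' k P) ∘ₗ (TensorProduct.map f g) ∘ₗ (Coalgebra.comul (R := k) (A := A))

/-- The convolution unit `η_P ∘ ε`. -/
noncomputable def convUnit : A →ₗ[k] P :=
  (Algebra.linearMap k P) ∘ₗ (Coalgebra.counit (R := k) (A := A))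

/-- `Φ_E : V → P ⊗ V`, `v ↦ Θ(S(v₍₁₎)) ⊗ v₍₀₎` (for `Θ = Φ` or `Θ = Φ⁻¹`). -/
noncomputable def PhiE (ρV : V →ₗ[k] V ⊗[k] A) (Θ : A →ₗ[k] P) : V →ₗ[k] P ⊗[k] V :=
  (TensorProduct.comm k V P).toLinearMap ∘ₗ
    (LinearMap.lTensor V (Θ ∘ₗ HopfAlgebra.antipode (R := k) (A := A))) ∘ₗ ρV

/-- The left `P`-module map `I : P ⊗ V → P ⊗ V`, `p ⊗ v ↦ p·Θ(S(v₍₁₎)) ⊗ v₍₀₎`. -/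
noncomputable def Imap (ρV : V →ₗ[k] V ⊗[k] A) (Θ : A →ₗ[k] P) :
    P ⊗[k] V →ₗ[k] P ⊗[k] V :=
  (LinearMap.rTensor V (LinearMap.mul' k P)) ∘ₗ
    (TensorProduct.assoc k P P V).symm.toLinearMap ∘ₗ
      (LinearMap.lTensor P (PhiE k ρV Θ))

lemma conv_apply (f g : A →ₗ[k] P) (a : A) :
    conv k f g a = LinearMap.mul' k P (TensorProduct.map f g (Coalgebra.comul a)) := rfl

lemma conv_assoc (f g h : A →ₗ[k] P) :
    conv k (conv k f g) h = conv k f (conv k g h) := by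
  ext a
  have h1 : ∀ w : A ⊗[k] A,
      LinearMap.mul' k P (TensorProduct.map (conv k f g) h w) =
      LinearMap.mul' k P (TensorProduct.map (LinearMap.mul' k P ∘ₗ TensorProduct.map f g) h
        ((LinearMap.rTensor A (Coalgebra.comul (R := k))) w)) := by
    intro w
    induction w using TensorProduct.induction_on with
    | zero => simp
    | tmul x y => simp [conv_apply]
    | add u v hu hv => simp only [map_add, hu, hv]
  have h2 : ∀ w : A ⊗[k] A,
      LinearMap.mul' k P (TensorProduct.map f (conv k g h) w) =
      LinearMap.mul' k P (TensorProduct.map f (LinearMap.mul' k P ∘ₗ TensorProduct.map g h)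
        ((LinearMap.lTensor A (Coalgebra.comul (R := k))) w)) := by
    intro w
    induction w using TensorProduct.induction_on with
    | zero => simp
    | tmul x y => simp [conv_apply]
    | add u v hu hv => simp only [map_add, hu, hv]
  have h3 : ∀ t : (A ⊗[k] A) ⊗[k] A,
      LinearMap.mul' k P (TensorProduct.map (LinearMap.mul' k P ∘ₗ TensorProduct.map f g) h t) =
      LinearMap.mul' k P (TensorProduct.map f (LinearMap.mul' k P ∘ₗ TensorProduct.map g h)
        (TensorProduct.assoc k A A A t)) := by
    intro t
    induction t using TensorProduct.induction_on with
    | zero => simp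
    | tmul u z =>
      induction u using TensorProduct.induction_on with
      | zero => simp
      | tmul x y => simp [mul_assoc]
      | add u v hu hv => simp only [add_tmul, map_add, hu, hv]
    | add u v hu hv => simp only [map_add, hu, hv]
  calc conv k (conv k f g) h a
      = LinearMap.mul' k P (TensorProduct.map (conv k f g) h (Coalgebra.comul a)) := rfl
    _ = LinearMap.mul' k P (TensorProduct.map (LinearMap.mul' k P ∘ₗ TensorProduct.map f g) h
          ((LinearMap.rTensor A (Coalgebra.comul (R := k))) (Coalgebra.comul a))) := h1 _
    _ = LinearMap.mul' k P (TensorProduct.map f (LinearMap.mul' k P ∘ₗ TensorProduct.map g h)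
          (TensorProduct.assoc k A A A
            ((LinearMap.rTensor A (Coalgebra.comul (R := k))) (Coalgebra.comul a)))) := h3 _
    _ = LinearMap.mul' k P (TensorProduct.map f (LinearMap.mul' k P ∘ₗ TensorProduct.map g h)
          ((LinearMap.lTensor A (Coalgebra.comul (R := k))) (Coalgebra.comul a))) := by
          rw [Coalgebra.coassoc_apply]
    _ = conv k f (conv k g h) a := (h2 _).symm

lemma conv_unit_right (f : A →ₗ[k] P) : conv k f (convUnit k) = f := by
  ext a
  have h1 : ∀ w : A ⊗[k] A,
      LinearMap.mul' k P (TensorProduct.map f (convUnit k) w) =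
      f ((TensorProduct.rid k A) ((LinearMap.lTensor A (Coalgebra.counit (R := k))) w)) := by
    intro w
    induction w using TensorProduct.induction_on with
    | zero => simp
    | tmul x y =>
      simp only [TensorProduct.map_tmul, LinearMap.mul'_apply, convUnit, LinearMap.coe_comp,
        Function.comp_apply, Algebra.linearMap_apply, LinearMap.lTensor_tmul,
        TensorProduct.rid_tmul, map_smul]
      rw [Algebra.smul_def, Algebra.commutes]
    | add u v hu hv => simp only [map_add, hu, hv]
  calc conv k f (convUnit k) a
      = f ((TensorProduct.rid k A) ((LinearMap.lTensor A (Coalgebra.counit (R := k)))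
          (Coalgebra.comul a))) := h1 _
    _ = f a := by rw [Coalgebra.lTensor_counit_comul]; simp

lemma conv_unit_left (f : A →ₗ[k] P) : conv k (convUnit k) f = f := by
  ext a
  have h1 : ∀ w : A ⊗[k] A,
      LinearMap.mul' k P (TensorProduct.map (convUnit k) f w) =
      f ((TensorProduct.lid k A) ((LinearMap.rTensor A (Coalgebra.counit (R := k))) w)) := by
    intro w
    induction w using TensorProduct.induction_on with
    | zero => simp
    | tmul x y =>
      simp only [TensorProduct.map_tmul, LinearMap.mul'_apply, convUnit, LinearMap.coe_comp,
        Function.comp_apply, Algebra.linearMap_apply, LinearMap.rTensor_tmul,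
        TensorProduct.lid_tmul, map_smul]
      rw [Algebra.smul_def]
    | add u v hu hv => simp only [map_add, hu, hv]
  calc conv k (convUnit k) f a
      = f ((TensorProduct.lid k A) ((LinearMap.rTensor A (Coalgebra.counit (R := k)))
          (Coalgebra.comul a))) := h1 _
    _ = f a := by rw [Coalgebra.rTensor_counit_comul]; simp

lemma conv_unique (f g h : A →ₗ[k] P) (h1 : conv k f g = convUnit k)
    (h2 : conv k h f = convUnit k) : h = g := by
  have : conv k h (conv k f g) = conv k (conv k h f) g := (conv_assoc k h f g).symm
  rw [h1, h2, conv_unit_right, conv_unit_left] at this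
  exact this
lemma convUnit_counit :
    (convUnit k : A →ₗ[k] k) = Coalgebra.counit (R := k) := by
  ext a; simp [convUnit]

lemma counit_antipode :
    (Coalgebra.counit (R := k) (A := A)) ∘ₗ HopfAlgebra.antipode (R := k) =
      Coalgebra.counit (R := k) := by
  have key : conv k ((Coalgebra.counit (R := k) (A := A)) ∘ₗ HopfAlgebra.antipode (R := k))
      (Coalgebra.counit (R := k)) = Coalgebra.counit (R := k) := by
    ext a
    have h1 : ∀ w : A ⊗[k] A,
        LinearMap.mul' k k (TensorProduct.map
          ((Coalgebra.counit (R := k) (A := A)) ∘ₗ HopfAlgebra.antipode (R := k))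
          (Coalgebra.counit (R := k)) w) =
        Coalgebra.counit (R := k)
          (LinearMap.mul' k A ((HopfAlgebra.antipode (R := k) (A := A)).rTensor A w)) := by
      intro w
      induction w using TensorProduct.induction_on with
      | zero => simp
      | tmul x y => simp [Bialgebra.counit_mul]
      | add u v hu hv => simp only [map_add, hu, hv]
    calc conv k ((Coalgebra.counit (R := k) (A := A)) ∘ₗ HopfAlgebra.antipode (R := k))
          (Coalgebra.counit (R := k)) a
        = Coalgebra.counit (R := k) (LinearMap.mul' k A
            ((HopfAlgebra.antipode (R := k) (A := A)).rTensor A (Coalgebra.comul a))) := h1 _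
      _ = Coalgebra.counit (R := k) a := by
          rw [HopfAlgebra.mul_antipode_rTensor_comul_apply]; simp
  have := conv_unit_right k ((Coalgebra.counit (R := k) (A := A)) ∘ₗ HopfAlgebra.antipode (R := k))
  rw [convUnit_counit] at this
  rw [← this, key]
/-- `x ⊗ y ↦ S(x) * y`. -/
noncomputable def muS : A ⊗[k] A →ₗ[k] A :=
  LinearMap.mul' k A ∘ₗ (HopfAlgebra.antipode (R := k)).rTensor A

@[simp] lemma muS_tmul (x y : A) :
    muS k (x ⊗ₜ y) = HopfAlgebra.antipode (R := k) x * y := rfl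

/-- `(p⊗q)⊗(y⊗z) ↦ S(p)y ⊗ S(q)z`. -/
noncomputable def F1 : (A ⊗[k] A) ⊗[k] (A ⊗[k] A) →ₗ[k] A ⊗[k] A :=
  (TensorProduct.map (muS k) (muS k)) ∘ₗ
    (TensorProduct.tensorTensorTensorComm k A A A A).toLinearMap

/-- `((x₁⊗x₂)⊗y)⊗z ↦ S(x₂)y ⊗ S(x₁)z`. -/
noncomputable def F4 : ((A ⊗[k] A) ⊗[k] A) ⊗[k] A →ₗ[k] A ⊗[k] A :=
  F1 k ∘ₗ (LinearMap.rTensor (A ⊗[k] A) (TensorProduct.comm k A A).toLinearMap) ∘ₗ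
    (TensorProduct.assoc k (A ⊗[k] A) A A).toLinearMap

/-- `(b₁⊗b₂)⊗z ↦ (μ∘(S⊗id)∘Δ)(b₂) ⊗ S(b₁)z`. -/
noncomputable def F5 : (A ⊗[k] A) ⊗[k] A →ₗ[k] A ⊗[k] A :=
  (TensorProduct.map (muS k ∘ₗ Coalgebra.comul) (muS k)) ∘ₗ
    (TensorProduct.assoc k A A A).toLinearMap ∘ₗ
      (LinearMap.rTensor A (TensorProduct.comm k A A).toLinearMap)

noncomputable def F5' : (A ⊗[k] A) ⊗[k] A →ₗ[k] A ⊗[k] A :=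
  (TensorProduct.map (Algebra.linearMap k A ∘ₗ Coalgebra.counit) (muS k)) ∘ₗ
    (TensorProduct.assoc k A A A).toLinearMap ∘ₗ
      (LinearMap.rTensor A (TensorProduct.comm k A A).toLinearMap)

noncomputable def F6 : (A ⊗[k] k) ⊗[k] A →ₗ[k] A ⊗[k] A :=
  (TensorProduct.mk k A A 1) ∘ₗ muS k ∘ₗ
    (LinearMap.rTensor A (TensorProduct.rid k A).toLinearMap)

lemma comul_antipode :
    (Coalgebra.comul (R := k) (A := A)) ∘ₗ HopfAlgebra.antipode (R := k) =
      (TensorProduct.map (HopfAlgebra.antipode (R := k)) (HopfAlgebra.antipode (R := k))) ∘ₗ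
        (TensorProduct.comm k A A).toLinearMap ∘ₗ Coalgebra.comul := by
  set S := HopfAlgebra.antipode (R := k) (A := A) with hS
  set Δ := Coalgebra.comul (R := k) (A := A) with hΔ
  set D2 : A →ₗ[k] A ⊗[k] A :=
    (TensorProduct.map S S) ∘ₗ (TensorProduct.comm k A A).toLinearMap ∘ₗ Δ with hD2
  have hEasy : conv k Δ (Δ ∘ₗ S) = convUnit k := by
    ext a
    have h1 : ∀ w : A ⊗[k] A,
        LinearMap.mul' k (A ⊗[k] A) (TensorProduct.map Δ (Δ ∘ₗ S) w) =
          Δ (LinearMap.mul' k A (S.lTensor A w)) := by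
      intro w
      induction w using TensorProduct.induction_on with
      | zero => simp
      | tmul x y => simp [hΔ, Bialgebra.comul_mul]
      | add u v hu hv => simp only [map_add, hu, hv]
    calc conv k Δ (Δ ∘ₗ S) a
        = Δ (LinearMap.mul' k A (S.lTensor A (Δ a))) := h1 _
      _ = convUnit k a := by
          rw [hS, hΔ, HopfAlgebra.mul_antipode_lTensor_comul_apply]
          simp [convUnit]
  have hHard : conv k D2 Δ = convUnit k := by
    ext a
    have c1 : ∀ u q : A ⊗[k] A, (TensorProduct.map S S u) * q = F1 k (u ⊗ₜ q) := by
      intro u q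
      induction u using TensorProduct.induction_on with
      | zero => simp [F1]
      | tmul x y =>
        induction q using TensorProduct.induction_on with
        | zero => simp [F1]
        | tmul z w => simp [F1, Algebra.TensorProduct.tmul_mul_tmul, hS]
        | add q1 q2 h1 h2 => simp only [tmul_add, map_add, mul_add, h1, h2]
      | add u1 u2 h1 h2 => simp only [add_tmul, map_add, add_mul, h1, h2]
    have c2 : ∀ w : A ⊗[k] A,
        LinearMap.mul' k (A ⊗[k] A) (TensorProduct.map D2 Δ w) =
          F1 k ((TensorProduct.map ((TensorProduct.comm k A A).toLinearMap ∘ₗ Δ) Δ) w) := by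
      intro w
      induction w using TensorProduct.induction_on with
      | zero => simp
      | tmul x y =>
        simp only [TensorProduct.map_tmul, LinearMap.mul'_apply, hD2, LinearMap.coe_comp,
          Function.comp_apply, LinearEquiv.coe_coe]
        exact c1 _ _
      | add u v hu hv => simp only [map_add, hu, hv]
    have c3 : ∀ w : A ⊗[k] A,
        (TensorProduct.map ((TensorProduct.comm k A A).toLinearMap ∘ₗ Δ) Δ) w =
          (LinearMap.rTensor (A ⊗[k] A) ((TensorProduct.comm k A A).toLinearMap ∘ₗ Δ))
            ((LinearMap.lTensor A Δ) w) := by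
      intro w
      induction w using TensorProduct.induction_on with
      | zero => simp
      | tmul x y => simp
      | add u v hu hv => simp only [map_add, hu, hv]
    have c5 : ∀ t : (A ⊗[k] A) ⊗[k] A,
        F1 k ((LinearMap.rTensor (A ⊗[k] A) ((TensorProduct.comm k A A).toLinearMap ∘ₗ Δ))
          ((TensorProduct.assoc k A A A) t)) =
        F4 k ((LinearMap.rTensor A (LinearMap.rTensor A Δ)) t) := by
      intro t
      induction t using TensorProduct.induction_on with
      | zero => simp
      | tmul u z =>
        induction u using TensorProduct.induction_on with
        | zero => simp [zero_tmul]
        | tmul x y => simp [F4, TensorProduct.assoc_tmul]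
        | add u1 u2 h1 h2 => simp only [add_tmul, map_add, h1, h2]
      | add t1 t2 h1 h2 => simp only [map_add, h1, h2]
    have c6'' : ∀ (q : A ⊗[k] A) (b₁ z : A),
        F4 k (((TensorProduct.assoc k A A A).symm (b₁ ⊗ₜ q)) ⊗ₜ z) =
          (muS k q) ⊗ₜ (muS k (b₁ ⊗ₜ z)) := by
      intro q b₁ z
      induction q using TensorProduct.induction_on with
      | zero => simp [tmul_zero, zero_tmul]
      | tmul q1 q2 =>
        simp [F4, F1, TensorProduct.assoc_symm_tmul, TensorProduct.assoc_tmul,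
          TensorProduct.tensorTensorTensorComm_tmul]
      | add q1 q2 h1 h2 =>
        simp only [tmul_add, map_add, add_tmul, h1, h2]
    have c6 : ∀ t : (A ⊗[k] A) ⊗[k] A,
        F4 k ((LinearMap.rTensor A
            ((TensorProduct.assoc k A A A).symm.toLinearMap ∘ₗ LinearMap.lTensor A Δ)) t) =
          F5 k t := by
      intro t
      induction t using TensorProduct.induction_on with
      | zero => simp
      | tmul u z =>
        induction u using TensorProduct.induction_on with
        | zero => simp [zero_tmul]
        | tmul b₁ b₂ =>
          have := c6'' (Δ b₂) b₁ z
          simp only [LinearMap.rTensor_tmul, LinearMap.coe_comp, Function.comp_apply,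
            LinearEquiv.coe_coe, LinearMap.lTensor_tmul]
          rw [this]
          simp [F5, hΔ]
        | add u1 u2 h1 h2 => simp only [add_tmul, map_add, h1, h2]
      | add t1 t2 h1 h2 => simp only [map_add, h1, h2]
    have hmu : muS k ∘ₗ (Coalgebra.comul (R := k) (A := A)) =
        Algebra.linearMap k A ∘ₗ Coalgebra.counit := by
      unfold muS
      rw [LinearMap.comp_assoc]
      exact HopfAlgebra.mul_antipode_rTensor_comul
    have hF5 : F5 k (A := A) = F5' k := by
      unfold F5 F5'
      rw [hmu]
    have c7 : ∀ t : (A ⊗[k] A) ⊗[k] A,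
        F5' k t = F6 k ((LinearMap.rTensor A
          (LinearMap.lTensor A (Coalgebra.counit (R := k) (A := A)))) t) := by
      intro t
      induction t using TensorProduct.induction_on with
      | zero => simp
      | tmul u z =>
        induction u using TensorProduct.induction_on with
        | zero => simp [zero_tmul]
        | tmul b₁ b₂ =>
          simp only [F5', F6, LinearMap.coe_comp, Function.comp_apply, LinearEquiv.coe_coe,
            LinearMap.rTensor_tmul, TensorProduct.comm_tmul, TensorProduct.assoc_tmul,
            TensorProduct.map_tmul, Algebra.linearMap_apply, muS_tmul, LinearMap.lTensor_tmul,
            TensorProduct.rid_tmul, map_smul, smul_mul_assoc, TensorProduct.mk_apply,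
            Algebra.algebraMap_eq_smul_one, TensorProduct.smul_tmul, mul_smul_comm, TensorProduct.tmul_smul]
        | add u1 u2 h1 h2 => simp only [add_tmul, map_add, h1, h2]
      | add t1 t2 h1 h2 => simp only [map_add, h1, h2]
    have c8 : ∀ w : A ⊗[k] A,
        F6 k ((LinearMap.rTensor A ((TensorProduct.mk k A k).flip 1)) w) =
          (TensorProduct.mk k A A 1) (muS k w) := by
      intro w
      induction w using TensorProduct.induction_on with
      | zero => simp
      | tmul b z => simp [F6]
      | add u v hu hv => simp only [map_add, hu, hv]
    have hco2 : LinearMap.rTensor A Δ ∘ₗ Δ =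
        ((TensorProduct.assoc k A A A).symm.toLinearMap ∘ₗ LinearMap.lTensor A Δ) ∘ₗ Δ := by
      rw [LinearMap.comp_assoc]
      exact (Coalgebra.coassoc_symm (R := k) (A := A)).symm
    calc conv k D2 Δ a
        = F1 k ((TensorProduct.map ((TensorProduct.comm k A A).toLinearMap ∘ₗ Δ) Δ) (Δ a)) :=
          c2 _
      _ = F1 k ((LinearMap.rTensor (A ⊗[k] A) ((TensorProduct.comm k A A).toLinearMap ∘ₗ Δ))
            ((LinearMap.lTensor A Δ) (Δ a))) := by rw [c3]
      _ = F1 k ((LinearMap.rTensor (A ⊗[k] A) ((TensorProduct.comm k A A).toLinearMap ∘ₗ Δ))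
            ((TensorProduct.assoc k A A A) ((LinearMap.rTensor A Δ) (Δ a)))) := by
            rw [hΔ, Coalgebra.coassoc_apply]
      _ = F4 k ((LinearMap.rTensor A (LinearMap.rTensor A Δ))
            ((LinearMap.rTensor A Δ) (Δ a))) := c5 _
      _ = F4 k ((LinearMap.rTensor A (LinearMap.rTensor A Δ ∘ₗ Δ)) (Δ a)) := by
            rw [LinearMap.rTensor_comp, LinearMap.comp_apply]
      _ = F4 k ((LinearMap.rTensor A
            (((TensorProduct.assoc k A A A).symm.toLinearMap ∘ₗ LinearMap.lTensor A Δ) ∘ₗ Δ))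
            (Δ a)) := by rw [← hco2]
      _ = F4 k ((LinearMap.rTensor A
            ((TensorProduct.assoc k A A A).symm.toLinearMap ∘ₗ LinearMap.lTensor A Δ))
            ((LinearMap.rTensor A Δ) (Δ a))) := by
            rw [LinearMap.rTensor_comp, LinearMap.comp_apply]
      _ = F5 k ((LinearMap.rTensor A Δ) (Δ a)) := c6 _
      _ = F5' k ((LinearMap.rTensor A Δ) (Δ a)) := by rw [hF5]
      _ = F6 k ((LinearMap.rTensor A
            (LinearMap.lTensor A (Coalgebra.counit (R := k) (A := A))))
            ((LinearMap.rTensor A Δ) (Δ a))) := c7 _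
      _ = F6 k ((LinearMap.rTensor A
            (LinearMap.lTensor A (Coalgebra.counit (R := k) (A := A)) ∘ₗ Δ)) (Δ a)) := by
            rw [LinearMap.rTensor_comp, LinearMap.comp_apply]
      _ = F6 k ((LinearMap.rTensor A ((TensorProduct.mk k A k).flip 1)) (Δ a)) := by
            rw [hΔ, Coalgebra.lTensor_counit_comp_comul]
      _ = (TensorProduct.mk k A A 1) (muS k (Δ a)) := c8 _
      _ = convUnit k a := by
            rw [show muS k (Δ a) = algebraMap k A (Coalgebra.counit (R := k) a) from
              HopfAlgebra.mul_antipode_rTensor_comul_apply a]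
            simp [convUnit, Algebra.TensorProduct.algebraMap_apply,
              Algebra.algebraMap_eq_smul_one, TensorProduct.smul_tmul,
              Algebra.TensorProduct.one_def]
  exact (conv_unique k Δ (Δ ∘ₗ S) D2 hEasy hHard).symm
lemma PhiE_apply (ρV : V →ₗ[k] V ⊗[k] A) (Θ : A →ₗ[k] P) (v : V) :
    PhiE k ρV Θ v = (TensorProduct.comm k V P)
      ((LinearMap.lTensor V (Θ ∘ₗ HopfAlgebra.antipode (R := k) (A := A))) (ρV v)) := rfl

lemma Imap_tmul (ρV : V →ₗ[k] V ⊗[k] A) (Θ : A →ₗ[k] P) (p : P) (v : V) :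
    Imap k ρV Θ (p ⊗ₜ v) = LinearMap.rTensor V (LinearMap.mulLeft k p) (PhiE k ρV Θ v) := by
  have h : ∀ x : P ⊗[k] V,
      LinearMap.rTensor V (LinearMap.mul' k P) ((TensorProduct.assoc k P P V).symm (p ⊗ₜ x)) =
        LinearMap.rTensor V (LinearMap.mulLeft k p) x := by
    intro x
    induction x using TensorProduct.induction_on with
    | zero => simp [tmul_zero]
    | tmul q v' => simp [TensorProduct.assoc_symm_tmul]
    | add u w hu hw => simp only [tmul_add, map_add, hu, hw]
  simpa [Imap] using h (PhiE k ρV Θ v)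

lemma Imap_comp_Imap (ρV : V →ₗ[k] V ⊗[k] A)
    (hVcoassoc : (LinearMap.rTensor A ρV) ∘ₗ ρV =
      (TensorProduct.assoc k V A A).symm.toLinearMap ∘ₗ
        (LinearMap.lTensor V (Coalgebra.comul (R := k) (A := A))) ∘ₗ ρV)
    (hVcounit : (TensorProduct.rid k V).toLinearMap ∘ₗ
      (LinearMap.lTensor V (Coalgebra.counit (R := k) (A := A))) ∘ₗ ρV =
        LinearMap.id)
    (α β : A →ₗ[k] P) (hαβ : conv k α β = convUnit k) (y : P ⊗[k] V) :
    Imap k ρV β (Imap k ρV α y) = y := by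
  set S := HopfAlgebra.antipode (R := k) (A := A) with hSdef
  set Δ := Coalgebra.comul (R := k) (A := A) with hΔdef
  set ε := Coalgebra.counit (R := k) (A := A) with hεdef
  induction y using TensorProduct.induction_on with
  | zero => simp
  | add u w hu hw => simp only [map_add, hu, hw]
  | tmul p v =>
    set Mp : (V ⊗[k] A) ⊗[k] A →ₗ[k] P ⊗[k] V :=
      (TensorProduct.comm k V P).toLinearMap ∘ₗ
        (LinearMap.lTensor V (LinearMap.mulLeft k p ∘ₗ LinearMap.mul' k P ∘ₗ
          TensorProduct.map (α ∘ₗ S) (β ∘ₗ S) ∘ₗ (TensorProduct.comm k A A).toLinearMap)) ∘ₗ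
        (TensorProduct.assoc k V A A).toLinearMap with hMp
    have claimA' : ∀ (u : V ⊗[k] A) (a : A),
        LinearMap.rTensor V (LinearMap.mulLeft k (p * α (S a)))
          ((TensorProduct.comm k V P) ((LinearMap.lTensor V (β ∘ₗ S)) u)) = Mp (u ⊗ₜ a) := by
      intro u a
      induction u using TensorProduct.induction_on with
      | zero => simp [zero_tmul]
      | tmul v'' a' =>
        simp [hMp, TensorProduct.assoc_tmul, mul_assoc]
      | add u1 u2 h1 h2 => simp only [add_tmul, map_add, h1, h2]
    have claimA : ∀ w : V ⊗[k] A,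
        Imap k ρV β (LinearMap.rTensor V (LinearMap.mulLeft k p)
          ((TensorProduct.comm k V P) ((LinearMap.lTensor V (α ∘ₗ S)) w))) =
        Mp ((LinearMap.rTensor A ρV) w) := by
      intro w
      induction w using TensorProduct.induction_on with
      | zero => simp
      | tmul v' a =>
        simp only [LinearMap.lTensor_tmul, LinearMap.coe_comp, Function.comp_apply,
          TensorProduct.comm_tmul, LinearMap.rTensor_tmul, LinearMap.mulLeft_apply]
        rw [Imap_tmul, PhiE_apply, ← hSdef, ← claimA' (ρV v') a]
      | add u w hu hw => simp only [map_add, hu, hw]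
    have claimB' : ∀ (v' : V) (z : A ⊗[k] A),
        Mp ((TensorProduct.assoc k V A A).symm (v' ⊗ₜ z)) =
          (TensorProduct.comm k V P) (v' ⊗ₜ (LinearMap.mulLeft k p (LinearMap.mul' k P
            (TensorProduct.map (α ∘ₗ S) (β ∘ₗ S) ((TensorProduct.comm k A A) z))))) := by
      intro v' z
      induction z using TensorProduct.induction_on with
      | zero => simp [tmul_zero]
      | tmul a1 a2 => simp [hMp, TensorProduct.assoc_symm_tmul, TensorProduct.assoc_tmul]
      | add z1 z2 h1 h2 => simp only [tmul_add, map_add, h1, h2]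
    have hconv : ∀ a : A,
        LinearMap.mul' k P (TensorProduct.map (α ∘ₗ S) (β ∘ₗ S)
          ((TensorProduct.comm k A A) (Δ a))) = ε a • (1 : P) := by
      intro a
      have h1 : TensorProduct.map (α ∘ₗ S) (β ∘ₗ S) ((TensorProduct.comm k A A) (Δ a)) =
          TensorProduct.map α β (TensorProduct.map S S ((TensorProduct.comm k A A) (Δ a))) :=
        LinearMap.congr_fun (TensorProduct.map_comp α β S S) _
      have h2 : TensorProduct.map S S ((TensorProduct.comm k A A) (Δ a)) = Δ (S a) := by
        have := LinearMap.congr_fun (comul_antipode k (A := A)) a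
        simpa [hSdef, hΔdef] using this.symm
      rw [h1, h2]
      have h3 : LinearMap.mul' k P (TensorProduct.map α β (Δ (S a))) = conv k α β (S a) := rfl
      rw [h3, hαβ]
      have h4 : ε (S a) = ε a := LinearMap.congr_fun (counit_antipode k (A := A)) a
      simp [convUnit, h4, Algebra.algebraMap_eq_smul_one]
      exact congrArg (· • (1 : P)) h4
    have claimB : ∀ w : V ⊗[k] A,
        Mp ((TensorProduct.assoc k V A A).symm ((LinearMap.lTensor V Δ) w)) =
          (TensorProduct.comm k V P) ((LinearMap.lTensor V (ε.smulRight p)) w) := by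
      intro w
      induction w using TensorProduct.induction_on with
      | zero => simp
      | tmul v' a =>
        rw [LinearMap.lTensor_tmul, claimB', hconv]
        simp [mul_smul_comm]
      | add u w hu hw => simp only [map_add, hu, hw]
    have claimC : ∀ w : V ⊗[k] A,
        (TensorProduct.comm k V P) ((LinearMap.lTensor V (ε.smulRight p)) w) =
          p ⊗ₜ ((TensorProduct.rid k V) ((LinearMap.lTensor V ε) w)) := by
      intro w
      induction w using TensorProduct.induction_on with
      | zero => simp [tmul_zero]
      | tmul v' a => simp [TensorProduct.smul_tmul, TensorProduct.tmul_smul]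
      | add u w hu hw => simp only [map_add, hu, hw, tmul_add]
    have hco := LinearMap.congr_fun hVcoassoc v
    have hcu := LinearMap.congr_fun hVcounit v
    simp only [LinearMap.coe_comp, Function.comp_apply, LinearEquiv.coe_coe,
      LinearMap.id_coe, id_eq] at hco hcu
    rw [Imap_tmul, PhiE_apply, ← hSdef, claimA (ρV v), hco, claimB (ρV v), claimC (ρV v), hcu]
lemma DeltaE_PhiE (ρ : P →ₐ[k] P ⊗[k] A) (ρV : V →ₗ[k] V ⊗[k] A)
    (hVcoassoc : (LinearMap.rTensor A ρV) ∘ₗ ρV =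
      (TensorProduct.assoc k V A A).symm.toLinearMap ∘ₗ
        (LinearMap.lTensor V (Coalgebra.comul (R := k) (A := A))) ∘ₗ ρV)
    (Φ : A →ₗ[k] P)
    (hΦ : ρ.toLinearMap ∘ₗ Φ =
      (TensorProduct.map Φ LinearMap.id) ∘ₗ (Coalgebra.comul (R := k) (A := A)))
    (v : V) :
    DeltaE k ρ ρV (PhiE k ρV Φ v) = (PhiE k ρV Φ v) ⊗ₜ[k] (1 : A) := by
  set S := HopfAlgebra.antipode (R := k) (A := A) with hSdef
  set Δ := Coalgebra.comul (R := k) (A := A) with hΔdef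
  set g : A →ₗ[k] P ⊗[k] A :=
    TensorProduct.map (Φ ∘ₗ S) S ∘ₗ (TensorProduct.comm k A A).toLinearMap ∘ₗ Δ with hgdef
  have hg : ρ.toLinearMap ∘ₗ Φ ∘ₗ S = g := by
    rw [hgdef, ← LinearMap.comp_assoc, hΦ]
    have h2 : Δ ∘ₗ S = TensorProduct.map S S ∘ₗ (TensorProduct.comm k A A).toLinearMap ∘ₗ Δ :=
      comul_antipode k
    calc (TensorProduct.map Φ LinearMap.id ∘ₗ Δ) ∘ₗ S
        = TensorProduct.map Φ LinearMap.id ∘ₗ (Δ ∘ₗ S) := by rw [LinearMap.comp_assoc]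
      _ = (TensorProduct.map Φ LinearMap.id ∘ₗ TensorProduct.map S S) ∘ₗ
            (TensorProduct.comm k A A).toLinearMap ∘ₗ Δ := by
            rw [h2, ← LinearMap.comp_assoc]
      _ = TensorProduct.map (Φ ∘ₗ S) S ∘ₗ (TensorProduct.comm k A A).toLinearMap ∘ₗ Δ := by
            rw [← TensorProduct.map_comp]
            simp
  set Nmap : (V ⊗[k] A) ⊗[k] A →ₗ[k] (P ⊗[k] V) ⊗[k] A :=
    (TensorProduct.map LinearMap.id
        ((LinearMap.mul' k A) ∘ₗ (TensorProduct.comm k A A).toLinearMap)) ∘ₗ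
      (TensorProduct.tensorTensorTensorComm k P A V A).toLinearMap ∘ₗ
        (LinearMap.rTensor (V ⊗[k] A) (ρ.toLinearMap ∘ₗ Φ ∘ₗ S)) ∘ₗ
          (TensorProduct.comm k (V ⊗[k] A) A).toLinearMap with hNmap
  have claimD : ∀ w : V ⊗[k] A,
      DeltaE k ρ ρV ((TensorProduct.comm k V P) ((LinearMap.lTensor V (Φ ∘ₗ S)) w)) =
        Nmap ((LinearMap.rTensor A ρV) w) := by
    intro w
    induction w using TensorProduct.induction_on with
    | zero => simp
    | tmul v' a =>
      simp only [LinearMap.lTensor_tmul, LinearMap.coe_comp, Function.comp_apply,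
        LinearEquiv.coe_coe, TensorProduct.comm_tmul, LinearMap.rTensor_tmul, hNmap,
        DeltaE, TensorProduct.map_tmul]
    | add u w hu hw => simp only [map_add, hu, hw]
  set Ymap : V → (A ⊗[k] (P ⊗[k] A)) →ₗ[k] (P ⊗[k] V) ⊗[k] A := fun v' =>
    (TensorProduct.map LinearMap.id
        ((LinearMap.mul' k A) ∘ₗ (TensorProduct.comm k A A).toLinearMap)) ∘ₗ
      (TensorProduct.tensorTensorTensorComm k P A V A).toLinearMap ∘ₗ
        (LinearMap.lTensor (P ⊗[k] A) (TensorProduct.mk k V A v')) ∘ₗ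
          (TensorProduct.comm k A (P ⊗[k] A)).toLinearMap with hYmap
  have E1 : ∀ (v' : V) (z : A ⊗[k] A),
      Nmap ((TensorProduct.assoc k V A A).symm (v' ⊗ₜ z)) =
        Ymap v' ((LinearMap.lTensor A g) z) := by
    intro v' z
    induction z using TensorProduct.induction_on with
    | zero => simp [tmul_zero]
    | tmul a1 a2 =>
      simp only [TensorProduct.assoc_symm_tmul, hNmap, hYmap, LinearMap.coe_comp,
        Function.comp_apply, LinearEquiv.coe_coe, TensorProduct.comm_tmul,
        LinearMap.rTensor_tmul, LinearMap.lTensor_tmul, TensorProduct.mk_apply]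
      have h := LinearMap.congr_fun hg a2
      simp only [LinearMap.coe_comp, Function.comp_apply] at h
      rw [h]
    | add z1 z2 h1 h2 => simp only [tmul_add, map_add, h1, h2]
  set Z3 : V → A ⊗[k] A →ₗ[k] (P ⊗[k] V) ⊗[k] A := fun v' =>
    LinearMap.rTensor A ((TensorProduct.mk k P V).flip v' ∘ₗ Φ ∘ₗ S) ∘ₗ
      (TensorProduct.comm k A A).toLinearMap with hZ3
  have E3 : ∀ (v' : V) (t : (A ⊗[k] A) ⊗[k] A),
      Ymap v' ((LinearMap.lTensor A (TensorProduct.map (Φ ∘ₗ S) S))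
        ((LinearMap.lTensor A (TensorProduct.comm k A A).toLinearMap)
          ((TensorProduct.assoc k A A A) t))) =
      Z3 v' ((LinearMap.rTensor A (LinearMap.mul' k A ∘ₗ LinearMap.lTensor A S)) t) := by
    intro v' t
    induction t using TensorProduct.induction_on with
    | zero => simp
    | tmul u z =>
      induction u using TensorProduct.induction_on with
      | zero => simp [zero_tmul]
      | tmul x y =>
        simp [hYmap, hZ3, TensorProduct.assoc_tmul,
          TensorProduct.tensorTensorTensorComm_tmul]
      | add u1 u2 h1 h2 => simp only [add_tmul, map_add, h1, h2]
    | add t1 t2 h1 h2 => simp only [map_add, h1, h2]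
  have claimE : ∀ w : V ⊗[k] A,
      Nmap ((TensorProduct.assoc k V A A).symm ((LinearMap.lTensor V Δ) w)) =
        ((TensorProduct.comm k V P) ((LinearMap.lTensor V (Φ ∘ₗ S)) w)) ⊗ₜ[k] (1 : A) := by
    intro w
    induction w using TensorProduct.induction_on with
    | zero => simp
    | tmul v' a =>
      rw [LinearMap.lTensor_tmul, E1 v' (Δ a)]
      have hgl : (LinearMap.lTensor A g) (Δ a) =
          (LinearMap.lTensor A (TensorProduct.map (Φ ∘ₗ S) S))
            ((LinearMap.lTensor A (TensorProduct.comm k A A).toLinearMap)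
              ((LinearMap.lTensor A Δ) (Δ a))) := by
        rw [hgdef, LinearMap.lTensor_comp, LinearMap.lTensor_comp]
        rfl
      rw [hgl, show (LinearMap.lTensor A Δ) (Δ a) =
        (TensorProduct.assoc k A A A) ((LinearMap.rTensor A Δ) (Δ a)) from
          (Coalgebra.coassoc_apply a).symm, E3 v' _]
      have harg : LinearMap.mul' k A ∘ₗ LinearMap.lTensor A S ∘ₗ Δ =
          Algebra.linearMap k A ∘ₗ Coalgebra.counit :=
        HopfAlgebra.mul_antipode_lTensor_comul
      have hc2 : (LinearMap.rTensor A (LinearMap.mul' k A ∘ₗ LinearMap.lTensor A S))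
          ((LinearMap.rTensor A Δ) (Δ a)) =
          (LinearMap.rTensor A (Algebra.linearMap k A ∘ₗ Coalgebra.counit)) (Δ a) := by
        rw [← LinearMap.comp_apply, ← LinearMap.rTensor_comp, LinearMap.comp_assoc, harg]
      have hfin : (LinearMap.rTensor A (Algebra.linearMap k A ∘ₗ Coalgebra.counit)) (Δ a) =
          (1 : A) ⊗ₜ[k] a := by
        rw [LinearMap.rTensor_comp, LinearMap.comp_apply, hΔdef, Coalgebra.rTensor_counit_comul,
          LinearMap.rTensor_tmul]
        simp
      rw [hc2, hfin]
      simp [hZ3, TensorProduct.comm_tmul]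
    | add u w hu hw => simp only [map_add, hu, hw, add_tmul]
  have hco := LinearMap.congr_fun hVcoassoc v
  simp only [LinearMap.coe_comp, Function.comp_apply, LinearEquiv.coe_coe] at hco
  rw [PhiE_apply, ← hSdef, claimD (ρV v), hco, claimE (ρV v)]

/-- for a trivialization `Φ` (convolution invertible, unital,
right-covariant), `Φ_E(v) = Φ(S(v₍₁₎)) ⊗ v₍₀₎` lands in `E`, and the left
`P`-module map `I(p ⊗ v) = p·Φ(S(v₍₁₎)) ⊗ v₍₀₎` is bijective with inverse
`Ĩ(p ⊗ v) = p·Φ⁻¹(S(v₍₁₎)) ⊗ v₍₀₎`. -/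
theorem stmt16 (ρ : P →ₐ[k] P ⊗[k] A) (ρV : V →ₗ[k] V ⊗[k] A)
    (hcoassoc : (LinearMap.rTensor A ρ.toLinearMap) ∘ₗ ρ.toLinearMap =
      (TensorProduct.assoc k P A A).symm.toLinearMap ∘ₗ
        (LinearMap.lTensor P (Coalgebra.comul (R := k) (A := A))) ∘ₗ ρ.toLinearMap)
    (hcounit : (TensorProduct.rid k P).toLinearMap ∘ₗ
      (LinearMap.lTensor P (Coalgebra.counit (R := k) (A := A))) ∘ₗ ρ.toLinearMap =
        LinearMap.id)
    (hVcoassoc : (LinearMap.rTensor A ρV) ∘ₗ ρV =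
      (TensorProduct.assoc k V A A).symm.toLinearMap ∘ₗ
        (LinearMap.lTensor V (Coalgebra.comul (R := k) (A := A))) ∘ₗ ρV)
    (hVcounit : (TensorProduct.rid k V).toLinearMap ∘ₗ
      (LinearMap.lTensor V (Coalgebra.counit (R := k) (A := A))) ∘ₗ ρV =
        LinearMap.id)
    (Φ Ψ : A →ₗ[k] P)
    (hinv₁ : conv k Φ Ψ = convUnit k) (hinv₂ : conv k Ψ Φ = convUnit k)
    (hΦ : ρ.toLinearMap ∘ₗ Φ =
      (TensorProduct.map Φ LinearMap.id) ∘ₗ (Coalgebra.comul (R := k) (A := A)))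
    (hΦ1 : Φ 1 = 1) :
    (∀ v : V, DeltaE k ρ ρV (PhiE k ρV Φ v) = (PhiE k ρV Φ v) ⊗ₜ[k] (1 : A)) ∧
      (∀ y : P ⊗[k] V, Imap k ρV Ψ (Imap k ρV Φ y) = y) ∧
      (∀ y : P ⊗[k] V, Imap k ρV Φ (Imap k ρV Ψ y) = y) ∧
      Function.Bijective (Imap k ρV Φ) := by
  refine ⟨fun v => DeltaE_PhiE k ρ ρV hVcoassoc Φ hΦ v,
    fun y => Imap_comp_Imap k ρV hVcoassoc hVcounit Φ Ψ hinv₁ y,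
    fun y => Imap_comp_Imap k ρV hVcoassoc hVcounit Ψ Φ hinv₂ y, ?_, ?_⟩
  · exact Function.LeftInverse.injective (g := Imap k ρV Ψ)
      (fun y => Imap_comp_Imap k ρV hVcoassoc hVcounit Φ Ψ hinv₁ y)
  · exact Function.RightInverse.surjective
      (fun y => Imap_comp_Imap k ρV hVcoassoc hVcounit Ψ Φ hinv₂ y)
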